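/- arXiv:0804.0724 — 2 statements merged into one kernel-verified Lean document; each statement's English description precedes it below -/
import Mathlib

section
/- Let k ≥ 2 and n ≥ k, and suppose 2^(k−3) > k²·n/(k−1). Then there is no injection from the set of 2-colorings of {1,...,n} to the set of triples (index of a progression among at most k²·n/(k−1) options, color bit, 2-coloring of {1,...,n−k}) — hence the compression scheme encoding each step with ⌈log₂(k²n/(k−1))⌉+3 bits while deleting k bits cannot be injective, so some 2-coloring of {1,...,n} has no monochromatic k-term arithmetic progression. -/
/-- A coloring χ contains a monochromatic k-term arithmetic progression
within {1,...,n}. -/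
def hasMonoAP (c k n : ℕ) (χ : ℕ → Fin c) : Prop :=
  ∃ a d : ℕ, 1 ≤ a ∧ 1 ≤ d ∧ a + (k - 1) * d ≤ n ∧ ∀ i < k, χ (a + i * d) = χ a

/-- The van der Waerden number w(k;c): the least n such that every c-coloring of
{1,...,n} contains a monochromatic k-term arithmetic progression. -/
noncomputable def vdW (k c : ℕ) : ℕ := sInf {n | ∀ χ : ℕ → Fin c, hasMonoAP c k n χ}

/-!
An injection would give
`2 ^ n ≤ ⌊k²n/(k-1)⌋ · 2 · 2 ^ (n - k) < 2 ^ (k - 3) · 2 ^ (n - k + 1) = 2 ^ (n - 2)`.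

For the coloring we use the symmetric Lovász local lemma, in counting form on the uniform space of
colorings: if `P(E t | no E s, s ∈ S) ≤ p` whenever `S` avoids the neighbourhood `Γ t ∋ t`, and
`4 p |Γ t| ≤ 1`, then by strong induction on `S` one gets `P(E t | no E s, s ∈ S) ≤ 2 p` for all
`t ∉ S` (the neighbours in `S` remove at most half of the outcomes avoiding the others), so some
outcome avoids every event. The event that a `k`-term progression is monochromatic has
probability `2 ^ (1 - k)` and only sees the colors on the progression, hence is independent of the
events of the progressions disjoint from it; these exclude at most
`1 + k² ⌊(n-1)/(k-1)⌋ < 2 ^ (k - 3)` progressions.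
-/

open Finset

section LovaszLocalLemma

variable {Ω I : Type*} [Fintype Ω] [DecidableEq Ω]

def avoiding (E : I → Finset Ω) (S : Finset I) : Finset Ω := univ \ S.biUnion E

lemma avoiding_anti (E : I → Finset Ω) {S T : Finset I} (h : S ⊆ T) :
    avoiding E T ⊆ avoiding E S :=
  sdiff_subset_sdiff subset_rfl (biUnion_subset_biUnion_of_subset_left E h)

lemma card_avoiding_le_add [DecidableEq I] (E : I → Finset Ω) (S T : Finset I) :
    #(avoiding E S) ≤ #(avoiding E (S ∪ T)) + ∑ s ∈ T, #(E s ∩ avoiding E S) := by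
  calc #(avoiding E S)
      ≤ #(avoiding E (S ∪ T) ∪ T.biUnion fun s => E s ∩ avoiding E S) := by
        refine card_le_card fun ω hω => ?_
        by_cases hT : ∃ s ∈ T, ω ∈ E s
        · obtain ⟨s, hs, hωs⟩ := hT
          exact mem_union_right _ (mem_biUnion.2 ⟨s, hs, mem_inter.2 ⟨hωs, hω⟩⟩)
        · refine mem_union_left _ ?_
          simp only [avoiding, mem_sdiff, mem_biUnion, mem_union, mem_univ, true_and] at hω ⊢
          rintro ⟨s, hs | hs, hωs⟩
          exacts [hω ⟨s, hs, hωs⟩, hT ⟨s, hs, hωs⟩]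
    _ ≤ _ := (card_union_le _ _).trans (Nat.add_le_add_left card_biUnion_le _)

variable {E : I → Finset Ω} {Γ : I → Finset I} {p : ℝ}

theorem card_inter_avoiding_le [DecidableEq I] (hp : 0 ≤ p) (hΓ : ∀ t, 4 * p * #(Γ t) ≤ 1)
    (hE : ∀ t S, Disjoint S (Γ t) → (#(E t ∩ avoiding E S) : ℝ) ≤ p * #(avoiding E S))
    (S : Finset I) {t : I} (ht : t ∉ S) :
    (#(E t ∩ avoiding E S) : ℝ) ≤ 2 * p * #(avoiding E S) := by
  induction S using Finset.strongInduction generalizing t with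
  | H S ih =>
  set S₀ := S \ Γ t
  set S₁ := S ∩ Γ t
  have hfar : (#(E t ∩ avoiding E S) : ℝ) ≤ p * #(avoiding E S₀) :=
    le_trans (mod_cast card_le_card (inter_subset_inter_left (avoiding_anti E sdiff_subset)))
      (hE t S₀ sdiff_disjoint)
  have hnear : ∀ s ∈ S₁, (#(E s ∩ avoiding E S₀) : ℝ) ≤ 2 * p * #(avoiding E S₀) := by
    intro s hs
    have hs₀ : s ∉ S₀ := fun h => (mem_sdiff.1 h).2 (mem_inter.1 hs).2
    have hS₀ : S₀ ⊂ S :=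
      ssubset_of_subset_of_ne sdiff_subset (ne_of_mem_of_not_mem' (mem_inter.1 hs).1 hs₀).symm
    exact ih S₀ hS₀ hs₀
  have hloss : (#(avoiding E S₀) : ℝ) ≤ #(avoiding E S) + #S₁ * (2 * p * #(avoiding E S₀)) := by
    have h := card_avoiding_le_add E S₀ S₁
    rw [sdiff_union_inter] at h
    calc (#(avoiding E S₀) : ℝ) ≤ #(avoiding E S) + ∑ s ∈ S₁, (#(E s ∩ avoiding E S₀) : ℝ) := by
          exact_mod_cast h
      _ ≤ _ := by grw [sum_le_sum hnear, sum_const, nsmul_eq_mul]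
  have hsmall : 4 * p * #S₁ ≤ 1 :=
    le_trans (by gcongr; exact inter_subset_right) (hΓ t)
  nlinarith [(#(avoiding E S₀)).cast_nonneg (α := ℝ)]

theorem avoiding_nonempty [DecidableEq I] [Nonempty Ω] (hp : 0 ≤ p) (hself : ∀ t, t ∈ Γ t)
    (hΓ : ∀ t, 4 * p * #(Γ t) ≤ 1)
    (hE : ∀ t S, Disjoint S (Γ t) → (#(E t ∩ avoiding E S) : ℝ) ≤ p * #(avoiding E S))
    (S : Finset I) : (avoiding E S).Nonempty := by
  suffices 0 < (#(avoiding E S) : ℝ) from card_pos.1 (mod_cast this)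
  induction S using Finset.induction_on with
  | empty => simpa [avoiding] using Fintype.card_pos
  | insert t S ht ih =>
    have h2p : 2 * p < 1 := by
      have : (1 : ℝ) ≤ #(Γ t) := mod_cast card_pos.2 ⟨t, hself t⟩
      nlinarith [hΓ t]
    have hstep := card_avoiding_le_add E S {t}
    rw [sum_singleton, union_comm, ← insert_eq] at hstep
    have hloss := card_inter_avoiding_le hp hΓ hE S ht
    have : (#(avoiding E S) : ℝ) ≤ #(avoiding E (insert t S)) + #(E t ∩ avoiding E S) :=
      mod_cast hstep
    nlinarith

end LovaszLocalLemma

section ProductSpace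

variable {ι α : Type*} [Fintype ι] [DecidableEq ι] [Fintype α] [DecidableEq α]

theorem card_inter_mul_card_eq {T : Finset ι} {E F : Finset (ι → α)}
    (hE : DependsOn (· ∈ E) T) (hF : DependsOn (· ∈ F) (↑T)ᶜ) :
    #(E ∩ F) * Fintype.card (ι → α) = #E * #F := by
  rw [← card_univ, ← card_product, ← card_product]
  -- Exchanging the `T`-coordinates of a pair maps `(E ∩ F) × univ` onto `E × F`.
  let swap (x : (ι → α) × (ι → α)) : (ι → α) × (ι → α) :=
    (T.piecewise x.1 x.2, T.piecewise x.2 x.1)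
  have hswap (x) : swap (swap x) = x := by
    ext i <;> by_cases hi : i ∈ T <;> simp [swap, hi]
  refine card_nbij' swap swap (fun x hx => ?_) (fun x hx => ?_)
    (fun x _ => hswap x) (fun x _ => hswap x)
  · simp only [coe_product, Set.mem_prod, coe_inter, Set.mem_inter_iff, mem_coe] at hx ⊢
    exact ⟨(hE fun i hi => by simp [swap, mem_coe.1 hi]).mp hx.1.1,
      (hF fun i hi => by simp [swap, mem_coe.not.1 hi]).mp hx.1.2⟩
  · simp only [coe_product, Set.mem_prod, coe_inter, Set.mem_inter_iff, mem_coe, coe_univ,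
      Set.mem_univ, and_true] at hx ⊢
    exact ⟨(hE fun i hi => by simp [swap, mem_coe.1 hi]).mp hx.1,
      (hF fun i hi => by simp [swap, mem_coe.not.1 hi]).mp hx.2⟩

theorem card_inter_le_of_dependsOn [Nonempty α] {T : Finset ι} {E F : Finset (ι → α)} {p : ℝ}
    (hE : DependsOn (· ∈ E) T) (hF : DependsOn (· ∈ F) (↑T)ᶜ)
    (hEp : (#E : ℝ) ≤ p * Fintype.card (ι → α)) :
    (#(E ∩ F) : ℝ) ≤ p * #F := by
  have hN : (0 : ℝ) < Fintype.card (ι → α) := mod_cast Fintype.card_pos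
  have h : (#(E ∩ F) : ℝ) * Fintype.card (ι → α) = #E * #F :=
    mod_cast card_inter_mul_card_eq hE hF
  refine le_of_mul_le_mul_right ?_ hN
  rw [h]
  nlinarith [(#F).cast_nonneg (α := ℝ)]

theorem card_filter_forall_mem_eq (T : Finset ι) (c : α) :
    #{ω : ι → α | ∀ i ∈ T, ω i = c} = Fintype.card α ^ (Fintype.card ι - #T) := by
  have : ({ω : ι → α | ∀ i ∈ T, ω i = c} : Finset _) =
      Fintype.piFinset fun i => if i ∈ T then {c} else univ := by
    ext ω
    simp only [mem_filter, mem_univ, true_and, Fintype.mem_piFinset]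
    refine forall_congr' fun i => ?_
    split_ifs <;> simp_all
  rw [this, Fintype.card_piFinset]
  simp only [apply_ite card, card_singleton, card_univ]
  rw [prod_ite, prod_const_one, one_mul, prod_const, filter_not, filter_mem_eq_inter, univ_inter,
    ← compl_eq_univ_sdiff, card_compl]

theorem card_filter_exists_forall_mem_eq_le (T : Finset ι) :
    #{ω : ι → α | ∃ c, ∀ i ∈ T, ω i = c} ≤
      Fintype.card α * Fintype.card α ^ (Fintype.card ι - #T) := by
  have : ({ω : ι → α | ∃ c, ∀ i ∈ T, ω i = c} : Finset _) =
      univ.biUnion fun c => {ω : ι → α | ∀ i ∈ T, ω i = c} := by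
    ext ω; simp
  rw [this]
  refine card_biUnion_le.trans_eq ?_
  simp [card_filter_forall_mem_eq]

theorem DependsOn.mem_avoiding {I : Type*} {E : I → Finset (ι → α)} {S : Finset I} {U : Set ι}
    (hE : ∀ s ∈ S, DependsOn (· ∈ E s) U) : DependsOn (· ∈ avoiding E S) U := by
  intro x y hxy
  simp only [avoiding, mem_sdiff, mem_univ, true_and, mem_biUnion, eq_iff_iff]
  exact not_congr (exists_congr fun s => and_congr_right fun hs => (hE s hs hxy).to_iff)

end ProductSpace

section Progressions

open Fin.NatCast

variable {k n : ℕ} {s t : ℕ × ℕ}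

def IsAPIn (k n : ℕ) (t : ℕ × ℕ) : Prop := 1 ≤ t.1 ∧ 1 ≤ t.2 ∧ t.1 + (k - 1) * t.2 ≤ n

instance : DecidablePred (IsAPIn k n) := fun _ => inferInstanceAs (Decidable (_ ∧ _ ∧ _))

/-- Colorings of `{1, …, n}` are modelled as `Fin (n + 1) → Fin 2`, position `m` being the
coordinate `(m : Fin (n + 1))`; coordinate `0` is never looked at. -/
def apSupport (k n : ℕ) (t : ℕ × ℕ) : Finset (Fin (n + 1)) :=
  (range k).image fun i => ((t.1 + i * t.2 : ℕ) : Fin (n + 1))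

def monoEvent (k n : ℕ) (t : ℕ × ℕ) : Finset (Fin (n + 1) → Fin 2) :=
  {ω | IsAPIn k n t ∧ ∃ c, ∀ i ∈ apSupport k n t, ω i = c}

/-- A progression `(a', d')` in `{1, …, n}` meeting `(a, d)` has `a' + j d' = a + i d` for some
`i, j < k`, and `(k - 1) d' ≤ n - 1`. -/
def apNbhd (k n : ℕ) (t : ℕ × ℕ) : Finset (ℕ × ℕ) :=
  insert t ((range k ×ˢ range k ×ˢ Icc 1 ((n - 1) / (k - 1))).image
    fun q => (t.1 + q.1 * t.2 - q.2.1 * q.2.2, q.2.2))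

lemma IsAPIn.add_mul_le (ht : IsAPIn k n t) {i : ℕ} (hi : i < k) : t.1 + i * t.2 ≤ n :=
  le_trans (by gcongr; omega) ht.2.2

lemma IsAPIn.le_succ (ht : IsAPIn k n t) : k ≤ n + 1 := by
  have : k - 1 ≤ (k - 1) * t.2 := Nat.le_mul_of_pos_right _ ht.2.1
  have := ht.2.2
  omega

lemma val_natCast_of_le {m : ℕ} (hm : m ≤ n) : ((m : Fin (n + 1)) : ℕ) = m :=
  Fin.val_cast_of_lt (Nat.lt_succ_of_le hm)

lemma card_apSupport (ht : IsAPIn k n t) : #(apSupport k n t) = k := by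
  rw [apSupport, card_image_of_injOn, card_range]
  intro i hi j hj hij
  have hij := congrArg Fin.val hij
  simp only [val_natCast_of_le (ht.add_mul_le (mem_range.1 hi)),
    val_natCast_of_le (ht.add_mul_le (mem_range.1 hj))] at hij
  exact Nat.eq_of_mul_eq_mul_right ht.2.1 (by omega)

lemma mem_apNbhd_of_not_disjoint (hk : 2 ≤ k) (hs : IsAPIn k n s) (ht : IsAPIn k n t)
    (h : ¬Disjoint (apSupport k n s) (apSupport k n t)) : s ∈ apNbhd k n t := by
  obtain ⟨v, hvs, hvt⟩ := not_disjoint_iff.1 h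
  obtain ⟨j, hj, rfl⟩ := mem_image.1 hvs
  obtain ⟨i, hi, hij⟩ := mem_image.1 hvt
  have hij := congrArg Fin.val hij
  rw [mem_range] at hi hj
  rw [val_natCast_of_le (ht.add_mul_le hi), val_natCast_of_le (hs.add_mul_le hj)] at hij
  have hd : s.2 ≤ (n - 1) / (k - 1) := by
    rw [Nat.le_div_iff_mul_le (by omega), mul_comm]
    have := hs.2.2
    have := hs.1
    omega
  refine mem_insert_of_mem (mem_image.2 ⟨(i, j, s.2), ?_, ?_⟩)
  · simp only [mem_product, mem_range, mem_Icc]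
    exact ⟨hi, hj, hs.2.1, hd⟩
  · exact Prod.ext (by dsimp only; omega) rfl

lemma card_apNbhd_le : #(apNbhd k n t) ≤ 1 + k * k * ((n - 1) / (k - 1)) := by
  refine (card_insert_le _ _).trans ?_
  rw [add_comm]
  gcongr
  refine card_image_le.trans_eq ?_
  simp [mul_assoc]

lemma dependsOn_mem_monoEvent : DependsOn (· ∈ monoEvent k n t) (apSupport k n t) := by
  intro x y hxy
  simp only [monoEvent, mem_filter, mem_univ, true_and, eq_iff_iff]
  refine and_congr_right fun _ => exists_congr fun c => forall₂_congr fun i hi => ?_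
  rw [hxy i hi]

lemma dependsOn_mem_monoEvent_compl (hk : 2 ≤ k) (ht : IsAPIn k n t) (hs : s ∉ apNbhd k n t) :
    DependsOn (· ∈ monoEvent k n s) (↑(apSupport k n t))ᶜ := by
  by_cases hsAP : IsAPIn k n s
  · refine dependsOn_mem_monoEvent.mono fun v hv => ?_
    exact disjoint_left.1 (not_not.1 (mt (mem_apNbhd_of_not_disjoint hk hsAP ht) hs)) hv
  · intro x y _
    simp [monoEvent, hsAP]

lemma card_monoEvent_mul_le : #(monoEvent k n t) * 2 ^ k ≤ 2 * 2 ^ (n + 1) := by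
  by_cases ht : IsAPIn k n t
  · have h := card_filter_exists_forall_mem_eq_le (α := Fin 2) (apSupport k n t)
    simp only [Fintype.card_fin, card_apSupport ht] at h
    calc #(monoEvent k n t) * 2 ^ k ≤ 2 * 2 ^ (n + 1 - k) * 2 ^ k := by
          gcongr
          exact (card_le_card fun ω hω => by simp_all [monoEvent]).trans h
      _ = 2 * 2 ^ (n + 1) := by rw [mul_assoc, ← pow_add, Nat.sub_add_cancel ht.le_succ]
  · simp [monoEvent, ht]

lemma card_inter_avoiding_monoEvent_le (hk : 2 ≤ k) {S : Finset (ℕ × ℕ)}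
    (hS : Disjoint S (apNbhd k n t)) :
    (#(monoEvent k n t ∩ avoiding (monoEvent k n) S) : ℝ) ≤
      2 / 2 ^ k * #(avoiding (monoEvent k n) S) := by
  by_cases ht : IsAPIn k n t
  · refine card_inter_le_of_dependsOn dependsOn_mem_monoEvent
      (DependsOn.mem_avoiding fun s hs => dependsOn_mem_monoEvent_compl hk ht
        (disjoint_left.1 hS hs)) ?_
    rw [Fintype.card_fun, Fintype.card_fin, Fintype.card_fin, div_mul_eq_mul_div,
      le_div_iff₀ (by positivity)]
    exact_mod_cast card_monoEvent_mul_le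
  · simp [monoEvent, ht]

lemma exists_mem_monoEvent_of_hasMonoAP (hk : 2 ≤ k) {ω : Fin (n + 1) → Fin 2}
    (h : hasMonoAP 2 k n fun m => ω m) :
    ∃ t ∈ range (n + 1) ×ˢ range (n + 1), ω ∈ monoEvent k n t := by
  obtain ⟨a, d, ha, hd, hlast, hmono⟩ := h
  have hdn : d ≤ (k - 1) * d := Nat.le_mul_of_pos_left d (by omega)
  refine ⟨(a, d), mem_product.2 ⟨mem_range.2 (by omega), mem_range.2 (by omega)⟩, ?_⟩
  simp only [monoEvent, mem_filter, mem_univ, true_and]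
  refine ⟨⟨ha, hd, hlast⟩, ω a, fun v hv => ?_⟩
  obtain ⟨i, hi, rfl⟩ := mem_image.1 hv
  exact hmono i (mem_range.1 hi)

theorem exists_coloring_not_hasMonoAP (hk : 2 ≤ k)
    (hD : 8 * (1 + k * k * ((n - 1) / (k - 1))) ≤ 2 ^ k) :
    ∃ χ : ℕ → Fin 2, ¬hasMonoAP 2 k n χ := by
  have hp : (0 : ℝ) ≤ 2 / 2 ^ k := by positivity
  have hΓ (t : ℕ × ℕ) : 4 * (2 / 2 ^ k) * (#(apNbhd k n t) : ℝ) ≤ 1 := by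
    have h8 : 8 * #(apNbhd k n t) ≤ 2 ^ k := (Nat.mul_le_mul_left 8 card_apNbhd_le).trans hD
    rw [show 4 * (2 / 2 ^ k) * (#(apNbhd k n t) : ℝ) = 8 * #(apNbhd k n t) / 2 ^ k by ring,
      div_le_one (by positivity)]
    exact_mod_cast h8
  obtain ⟨ω, hω⟩ := avoiding_nonempty hp (fun t => mem_insert_self t _) hΓ
    (fun t S hS => card_inter_avoiding_monoEvent_le hk hS) (range (n + 1) ×ˢ range (n + 1))
  refine ⟨fun m => ω m, fun h => ?_⟩
  obtain ⟨t, ht, hωt⟩ := exists_mem_monoEvent_of_hasMonoAP hk h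
  exact (mem_sdiff.1 hω).2 (mem_biUnion.2 ⟨t, ht, hωt⟩)

end Progressions

lemma three_le_of_lt_rpow {k n : ℕ} (hk : 2 ≤ k) (hn : k ≤ n)
    (h : (k : ℝ) ^ 2 * n / ((k : ℝ) - 1) < (2 : ℝ) ^ ((k : ℝ) - 3)) : 3 ≤ k := by
  by_contra hk3
  obtain rfl : k = 2 := by omega
  have hn2 : (2 : ℝ) ≤ n := mod_cast hn
  norm_num [Real.rpow_neg_one] at h
  linarith

lemma mul_two_mul_two_pow_lt {k n M : ℕ} (hk : 3 ≤ k) (hn : k ≤ n) (hM : M < 2 ^ (k - 3)) :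
    M * (2 * 2 ^ (n - k)) < 2 ^ n :=
  calc M * (2 * 2 ^ (n - k)) < 2 ^ (k - 3) * (2 * 2 ^ (n - k)) := by gcongr
    _ = 2 ^ (n - 2) := by rw [← pow_succ', ← pow_add]; congr 1; omega
    _ ≤ 2 ^ n := Nat.pow_le_pow_right (by norm_num) (by omega)

lemma eight_mul_le_two_pow_of_lt {k n : ℕ} (hk : 3 ≤ k) (hn : 1 ≤ n)
    (h : (k : ℝ) ^ 2 * n / ((k : ℝ) - 1) < 2 ^ (k - 3)) :
    8 * (1 + k * k * ((n - 1) / (k - 1))) ≤ 2 ^ k := by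
  have hk1 : (0 : ℝ) < k - 1 := by
    have : (3 : ℝ) ≤ k := mod_cast hk
    linarith
  have hnat : k * k * n < 2 ^ (k - 3) * (k - 1) := by
    rw [div_lt_iff₀ hk1] at h
    have : (((k * k * n : ℕ) : ℝ)) < ((2 ^ (k - 3) * (k - 1) : ℕ) : ℝ) := by
      push_cast [Nat.cast_sub (by omega : 1 ≤ k)]
      linarith
    exact_mod_cast this
  have hdiv : (n - 1) / (k - 1) * (k - 1) ≤ n - 1 := Nat.div_mul_le_self _ _
  have hsum : (1 + k * k * ((n - 1) / (k - 1))) * (k - 1) ≤ 2 ^ (k - 3) * (k - 1) :=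
    calc (1 + k * k * ((n - 1) / (k - 1))) * (k - 1)
        = (k - 1) + k * k * ((n - 1) / (k - 1) * (k - 1)) := by ring
      _ ≤ (k - 1) + k * k * (n - 1) := by gcongr
      _ ≤ k * k * n := by
        obtain ⟨m, rfl⟩ : ∃ m, n = m + 1 := ⟨n - 1, by omega⟩
        simp only [add_tsub_cancel_right]
        nlinarith [Nat.sub_le k 1, Nat.le_mul_self k]
      _ ≤ 2 ^ (k - 3) * (k - 1) := hnat.le
  have h8 : 2 ^ k = 8 * 2 ^ (k - 3) := by
    rw [show (8 : ℕ) = 2 ^ 3 by rfl, ← pow_add]; congr 1; omega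
  rw [h8]
  exact Nat.mul_le_mul_left 8 (Nat.le_of_mul_le_mul_right hsum (by omega))

/-- If 2^(k-3) > k²·n/(k-1), then there is no injection from 2-colorings of {1,...,n}
to triples (progression index, color bit, 2-coloring of {1,...,n-k}), and hence some
2-coloring of {1,...,n} has no monochromatic k-term arithmetic progression. -/
theorem compression_fails (k n : ℕ) (hk : 2 ≤ k) (hn : k ≤ n)
    (h : ((k : ℝ) ^ 2 * n / ((k : ℝ) - 1)) < (2 : ℝ) ^ ((k : ℝ) - 3)) :
    (¬ ∃ f : (Fin n → Fin 2) →
        (Fin ⌊(k : ℝ) ^ 2 * n / ((k : ℝ) - 1)⌋₊ × Fin 2 × (Fin (n - k) → Fin 2)),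
      Function.Injective f) ∧
    ∃ χ : ℕ → Fin 2, ¬ hasMonoAP 2 k n χ := by
  have hk3 : 3 ≤ k := three_le_of_lt_rpow hk hn h
  have hX : (k : ℝ) ^ 2 * n / ((k : ℝ) - 1) < 2 ^ (k - 3) := by
    have h2 : (2 : ℝ) ^ ((k : ℝ) - 3) = 2 ^ (k - 3) := by
      rw [← Real.rpow_natCast, Nat.cast_sub hk3, Nat.cast_ofNat]
    rwa [h2] at h
  refine ⟨fun ⟨f, hf⟩ => ?_,
    exists_coloring_not_hasMonoAP hk (eight_mul_le_two_pow_of_lt hk3 (by omega) hX)⟩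
  have hcard := Fintype.card_le_of_injective f hf
  simp only [Fintype.card_prod, Fintype.card_fun, Fintype.card_fin] at hcard
  have hX0 : 0 ≤ (k : ℝ) ^ 2 * n / ((k : ℝ) - 1) :=
    div_nonneg (by positivity) (sub_nonneg.2 (mod_cast (by omega : 1 ≤ k)))
  have hfloor : ⌊(k : ℝ) ^ 2 * n / ((k : ℝ) - 1)⌋₊ < 2 ^ (k - 3) :=
    (Nat.floor_lt hX0).2 (mod_cast hX)
  exact (mul_two_mul_two_pow_lt hk3 hn hfloor).not_ge hcard
end

section
/- If for every 2-coloring of {1,...,n} there exists a monochromatic k-term arithmetic progression, then 2^k ≤ 8·k²·n/(k−1); equivalently n ≥ 2^(k−3)·(k−1)/k². -/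
open Finset

section Resampling

variable {V β : Type*} [Fintype V] [DecidableEq V] [Fintype β] [DecidableEq β]

def monoColorings (T : Finset V) : Finset (V → β) :=
  univ.filter fun ω => ∀ x ∈ T, ∀ y ∈ T, ω x = ω y

theorem mem_monoColorings_congr {T : Finset V} {ω ω' : V → β} (h : ∀ x ∈ T, ω x = ω' x) :
    ω ∈ monoColorings T ↔ ω' ∈ monoColorings T := by
  simp only [monoColorings, mem_filter, mem_univ, true_and]
  exact forall₂_congr fun x hx => forall₂_congr fun y hy => by rw [h x hx, h y hy]

/-- Overwriting a colouring that is constant on `T` arbitrarily on `T` minus an anchor point is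
injective, and it stays in `G` because `G` only sees the colours off `T`. -/
theorem card_monoColorings_inter_mul_le {T : Finset V} (hT : T.Nonempty) {G : Finset (V → β)}
    (hG : ∀ ω ω' : V → β, (∀ x ∉ T, ω x = ω' x) → ω ∈ G → ω' ∈ G) :
    #(monoColorings T ∩ G) * Fintype.card β ^ (#T - 1) ≤ #G := by
  obtain ⟨a, ha⟩ := hT
  let resample : (V → β) × (T.erase a → β) → V → β := fun ωv x =>
    if hx : x ∈ T.erase a then ωv.2 ⟨x, hx⟩ else ωv.1 x
  have resample_of_mem {ωv x} (hx : x ∈ T.erase a) : resample ωv x = ωv.2 ⟨x, hx⟩ := dif_pos hx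
  have resample_of_notMem {ωv x} (hx : x ∉ T.erase a) : resample ωv x = ωv.1 x := dif_neg hx
  calc #(monoColorings T ∩ G) * Fintype.card β ^ (#T - 1)
      = #((monoColorings T ∩ G) ×ˢ (univ : Finset (T.erase a → β))) := by
        rw [card_product, card_univ, Fintype.card_fun, Fintype.card_coe, card_erase_of_mem ha]
    _ ≤ #G := by
      refine card_le_card_of_injOn resample ?_ ?_
      · rintro ⟨ω, v⟩ hωv
        simp only [coe_product, Set.mem_prod, mem_coe, mem_inter] at hωv
        refine hG ω _ (fun x hx => ?_) hωv.1.2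
        exact (resample_of_notMem (ωv := (ω, v)) fun h => hx (mem_of_mem_erase h)).symm
      · rintro ⟨ω₁, v₁⟩ h₁ ⟨ω₂, v₂⟩ h₂ heq
        simp only [coe_product, Set.mem_prod, mem_coe, mem_inter, monoColorings, mem_filter,
          mem_univ, true_and] at h₁ h₂
        have hv : v₁ = v₂ := funext fun ⟨x, hx⟩ => by
          simpa only [resample_of_mem hx] using congrFun heq x
        have hanchor : ω₁ a = ω₂ a := by
          simpa only [resample_of_notMem (notMem_erase a T)] using congrFun heq a
        have hω : ω₁ = ω₂ := funext fun x => by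
          by_cases hx : x ∈ T.erase a
          · have hxT := mem_of_mem_erase hx
            rw [h₁.1.1 x hxT a ha, h₂.1.1 x hxT a ha, hanchor]
          · simpa only [resample_of_notMem hx] using congrFun heq x
        rw [hv, hω]

end Resampling

section LocalLemma

variable {Ω ι : Type*} [Fintype Ω] [DecidableEq Ω] [DecidableEq ι] {A : ι → Finset Ω}

theorem card_compl_biUnion_le_add_sum (R T : Finset ι) :
    #(T.biUnion A)ᶜ ≤ #((R ∪ T).biUnion A)ᶜ + ∑ j ∈ R, #(A j ∩ (T.biUnion A)ᶜ) := by
  have hcover : (T.biUnion A)ᶜ ⊆ ((R ∪ T).biUnion A)ᶜ ∪ R.biUnion fun j => A j ∩ (T.biUnion A)ᶜ := by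
    intro ω hω
    simp only [mem_compl, mem_biUnion, not_exists, not_and] at hω
    by_cases hR : ∃ j ∈ R, ω ∈ A j
    · obtain ⟨j, hj, hωj⟩ := hR
      exact mem_union_right _ (mem_biUnion.2 ⟨j, hj, mem_inter.2 ⟨hωj, by simpa using hω⟩⟩)
    · push Not at hR
      refine mem_union_left _ ?_
      simp only [mem_compl, mem_biUnion, mem_union, not_exists, not_and]
      rintro j (hj | hj)
      exacts [hR j hj, hω j hj]
  calc #(T.biUnion A)ᶜ ≤ #(((R ∪ T).biUnion A)ᶜ ∪ R.biUnion fun j => A j ∩ (T.biUnion A)ᶜ) :=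
        card_le_card hcover
    _ ≤ _ := (card_union_le _ _).trans (Nat.add_le_add_left card_biUnion_le _)

theorem card_compl_biUnion_le_two_mul {R T : Finset ι} {q D : ℕ} (hq : 0 < q) (hD : 4 * D ≤ q)
    (hR : #R ≤ D) (hRT : ∀ j ∈ R, q * #(A j ∩ (T.biUnion A)ᶜ) ≤ 2 * #(T.biUnion A)ᶜ) :
    #(T.biUnion A)ᶜ ≤ 2 * #((R ∪ T).biUnion A)ᶜ := by
  have hsum : ∑ j ∈ R, q * #(A j ∩ (T.biUnion A)ᶜ) ≤ D * (2 * #(T.biUnion A)ᶜ) :=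
    (sum_le_card_nsmul _ _ _ hRT).trans (Nat.mul_le_mul_right _ hR)
  have hcover := Nat.mul_le_mul_left q (card_compl_biUnion_le_add_sum (A := A) R T)
  rw [mul_add, mul_sum] at hcover
  refine Nat.le_of_mul_le_mul_left ?_ hq
  nlinarith

/-- The invariant of the local lemma: conditioned on avoiding `S`, `A i` has probability `≤ 2 / q`. -/
theorem mul_card_inter_compl_biUnion_le (adj : ι → ι → Prop) [DecidableRel adj] {I : Finset ι}
    {q D : ℕ} (hD : 4 * D ≤ q) (hdeg : ∀ i ∈ I, #(I.filter (adj i)) ≤ D)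
    (hind : ∀ i ∈ I, ∀ S ⊆ I, (∀ j ∈ S, ¬ adj i j) →
      q * #(A i ∩ (S.biUnion A)ᶜ) ≤ #(S.biUnion A)ᶜ)
    {S : Finset ι} (hS : S ⊆ I) {i : ι} (hi : i ∈ I) :
    q * #(A i ∩ (S.biUnion A)ᶜ) ≤ 2 * #(S.biUnion A)ᶜ := by
  induction S using Finset.strongInduction generalizing i with
  | H S ih =>
  set F := S.filter fun j => ¬ adj i j
  have hF : F ⊆ I := (filter_subset _ _).trans hS
  have hanti : A i ∩ (S.biUnion A)ᶜ ⊆ A i ∩ (F.biUnion A)ᶜ :=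
    inter_subset_inter_left (compl_subset_compl.2 (biUnion_subset_biUnion_of_subset_left _
      (filter_subset _ _)))
  have hhalf : #(F.biUnion A)ᶜ ≤ 2 * #(S.biUnion A)ᶜ := by
    rcases (S.filter (adj i)).eq_empty_or_nonempty with hN | hN
    · rw [filter_eq_empty_iff] at hN
      rw [show F = S from filter_true_of_mem hN]
      omega
    · have hFS : F ⊂ S := by
        obtain ⟨j, hj⟩ := hN
        exact filter_ssubset.2 ⟨j, (mem_filter.1 hj).1, not_not.2 (mem_filter.1 hj).2⟩
      have hN_le : #(S.filter (adj i)) ≤ D := (card_le_card (filter_subset_filter _ hS)).trans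
        (hdeg i hi)
      have hq : 0 < q := by
        have := card_pos.2 hN
        omega
      have := card_compl_biUnion_le_two_mul hq hD hN_le
        fun j hj => ih F hFS hF (hS (mem_filter.1 hj).1)
      rwa [filter_union_filter_not_eq] at this
  calc q * #(A i ∩ (S.biUnion A)ᶜ) ≤ q * #(A i ∩ (F.biUnion A)ᶜ) :=
        Nat.mul_le_mul_left _ (card_le_card hanti)
    _ ≤ #(F.biUnion A)ᶜ := hind i hi F hF fun j hj => (mem_filter.1 hj).2
    _ ≤ 2 * #(S.biUnion A)ᶜ := hhalf

/-- Symmetric local lemma in counting form on the uniform space `Ω`: `1 / q` bounds the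
probabilities, and `A i` is independent of the events `A j` with `¬ adj i j`. -/
theorem exists_forall_notMem_of_four_mul_le [Nonempty Ω] (adj : ι → ι → Prop) [DecidableRel adj]
    {I : Finset ι} {q D : ℕ} (hD : 4 * D ≤ q) (hrefl : ∀ i ∈ I, adj i i)
    (hdeg : ∀ i ∈ I, #(I.filter (adj i)) ≤ D)
    (hind : ∀ i ∈ I, ∀ S ⊆ I, (∀ j ∈ S, ¬ adj i j) →
      q * #(A i ∩ (S.biUnion A)ᶜ) ≤ #(S.biUnion A)ᶜ) :
    ∃ ω, ∀ i ∈ I, ω ∉ A i := by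
  suffices hpos : ∀ S ⊆ I, 0 < #(S.biUnion A)ᶜ by
    obtain ⟨ω, hω⟩ := card_pos.1 (hpos I subset_rfl)
    exact ⟨ω, by simpa using hω⟩
  intro S
  induction S using Finset.induction_on with
  | empty => simpa using Fintype.card_pos
  | insert i S _ ih =>
    intro hS
    have hi := hS (mem_insert_self i S)
    have hS' := (subset_insert i S).trans hS
    have hq : 4 ≤ q := by
      have := card_pos.2 ⟨i, mem_filter.2 ⟨hi, hrefl i hi⟩⟩
      have := hdeg i hi
      omega
    have hbad := (Nat.mul_le_mul_right _ hq).trans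
      (mul_card_inter_compl_biUnion_le adj hD hdeg hind hS' hi)
    have hgood := ih hS'
    rw [biUnion_insert, compl_union, inter_comm, ← sdiff_eq_inter_compl, card_sdiff]
    omega

section ArithmeticProgression

variable {k n : ℕ}

/-- Colourings of `{0, …, n}` are functions on `Fin (n + 1)`. `Fin.ofNat` reduces mod `n + 1`, so
these are the points of the progression only when it lies in `{0, …, n}`, as it does for
`p ∈ apIndex k n`. -/
def apPoints (k n : ℕ) (p : ℕ × ℕ) : Finset (Fin (n + 1)) :=
  (range k).image fun i => Fin.ofNat (n + 1) (p.1 + i * p.2)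

def apIndex (k n : ℕ) : Finset (ℕ × ℕ) :=
  (range (n + 1) ×ˢ range (n + 1)).filter fun p => 0 < p.2 ∧ p.1 + (k - 1) * p.2 ≤ n

theorem mem_apIndex (hk : 2 ≤ k) {p : ℕ × ℕ} :
    p ∈ apIndex k n ↔ 0 < p.2 ∧ p.1 + (k - 1) * p.2 ≤ n := by
  simp only [apIndex, mem_filter, mem_product, mem_range, and_iff_right_iff_imp]
  rintro ⟨-, hp⟩
  have : p.2 ≤ (k - 1) * p.2 := Nat.le_mul_of_pos_left _ (by omega)
  omega

theorem val_apPoint {a d : ℕ} (had : a + (k - 1) * d ≤ n) {i : ℕ} (hi : i < k) :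
    (Fin.ofNat (n + 1) (a + i * d)).val = a + i * d := by
  have : i * d ≤ (k - 1) * d := Nat.mul_le_mul_right _ (by omega)
  rw [Fin.val_ofNat, Nat.mod_eq_of_lt (by omega)]

theorem card_apPoints (hk : 2 ≤ k) {p : ℕ × ℕ} (hp : p ∈ apIndex k n) :
    #(apPoints k n p) = k := by
  rw [mem_apIndex hk] at hp
  rw [apPoints, card_image_of_injOn, card_range]
  intro i hi j hj hij
  have := congrArg Fin.val hij
  rw [val_apPoint hp.2 (mem_range.1 hi), val_apPoint hp.2 (mem_range.1 hj)] at this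
  exact Nat.eq_of_mul_eq_mul_right hp.1 (by omega)

/-- An AP meeting a given `k`-point set is determined by the common point `x`, the position
`t < k` of `x` in the AP and the difference `d`, which satisfies `(k - 1) * d ≤ n`. -/
theorem card_filter_not_disjoint_apPoints_le (hk : 2 ≤ k) (p : ℕ × ℕ) :
    #((apIndex k n).filter fun p' => ¬ Disjoint (apPoints k n p) (apPoints k n p')) ≤
      k * (k * (n / (k - 1))) := by
  have hcover : ((apIndex k n).filter fun p' => ¬ Disjoint (apPoints k n p) (apPoints k n p')) ⊆
      (apPoints k n p).biUnion fun x =>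
        (range k ×ˢ Icc 1 (n / (k - 1))).image fun td => (x.val - td.1 * td.2, td.2) := by
    rintro ⟨a, d⟩ hp'
    rw [mem_filter, mem_apIndex hk, not_disjoint_iff] at hp'
    obtain ⟨⟨hd, had⟩, x, hx, hx'⟩ := hp'
    dsimp only at hd had
    obtain ⟨t, ht, rfl⟩ := mem_image.1 hx'
    rw [mem_range] at ht
    refine mem_biUnion.2 ⟨_, hx, mem_image.2 ⟨(t, d), ?_, ?_⟩⟩
    · simp only [mem_product, mem_range, mem_Icc]
      refine ⟨ht, hd, (Nat.le_div_iff_mul_le (by omega)).2 ?_⟩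
      rw [mul_comm]
      omega
    · rw [val_apPoint had ht]
      simp
  calc _ ≤ _ := card_le_card hcover
    _ ≤ #(apPoints k n p) * (k * (n / (k - 1))) := card_biUnion_le_card_mul _ _ _ fun x _ =>
        card_image_le.trans (by simp)
    _ ≤ k * (k * (n / (k - 1))) := Nat.mul_le_mul_right _ (card_image_le.trans (by simp))

theorem exists_coloring_forall_notMem_monoColorings (hk : 2 ≤ k) {c : ℕ} (hc : 0 < c)
    (h : 4 * (k * (k * (n / (k - 1)))) ≤ c ^ (k - 1)) :
    ∃ ω : Fin (n + 1) → Fin c, ∀ p ∈ apIndex k n, ω ∉ monoColorings (apPoints k n p) := by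
  have : Nonempty (Fin c) := ⟨⟨0, hc⟩⟩
  refine exists_forall_notMem_of_four_mul_le (Ω := Fin (n + 1) → Fin c)
    (A := fun p => monoColorings (apPoints k n p))
    (fun p p' => ¬ Disjoint (apPoints k n p) (apPoints k n p')) h ?_
    (fun p _ => card_filter_not_disjoint_apPoints_le hk p) ?_
  · intro p hp hdisj
    rw [disjoint_self_iff_empty, ← card_eq_zero, card_apPoints hk hp] at hdisj
    omega
  · intro p hp S _ hdisj
    have hne : (apPoints k n p).Nonempty := by
      rw [← card_pos, card_apPoints hk hp]
      omega
    have hind := card_monoColorings_inter_mul_le (β := Fin c) hne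
      (G := (S.biUnion fun p' => monoColorings (apPoints k n p'))ᶜ) ?_
    · rwa [card_apPoints hk hp, Fintype.card_fin, mul_comm] at hind
    · intro ω ω' hωω' hω
      simp only [mem_compl, mem_biUnion, not_exists, not_and] at hω ⊢
      intro p' hp'
      rw [← mem_monoColorings_congr fun x hx => hωω' x ?_]
      · exact hω p' hp'
      · exact disjoint_left.1 (not_not.1 (hdisj p' hp')).symm hx

theorem exists_not_hasMonoAP (hk : 2 ≤ k) {c : ℕ} (hc : 0 < c)
    (h : 4 * (k * (k * (n / (k - 1)))) ≤ c ^ (k - 1)) :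
    ∃ χ : ℕ → Fin c, ¬ hasMonoAP c k n χ := by
  obtain ⟨ω, hω⟩ := exists_coloring_forall_notMem_monoColorings hk hc h
  refine ⟨fun x => ω (Fin.ofNat (n + 1) x), ?_⟩
  rintro ⟨a, d, -, hd, had, hmono⟩
  refine hω (a, d) ((mem_apIndex hk).2 ⟨hd, had⟩) ?_
  have hanchor : ∀ x ∈ apPoints k n (a, d), ω x = ω (Fin.ofNat (n + 1) a) := by
    simp only [apPoints, mem_image, mem_range, forall_exists_index, and_imp]
    rintro _ i hi rfl
    exact hmono i hi
  simp only [monoColorings, mem_filter, mem_univ, true_and]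
  intro x hx y hy
  rw [hanchor x hx, hanchor y hy]

end ArithmeticProgression

theorem exists_two_coloring_not_hasMonoAP {k n : ℕ} (hk : 2 ≤ k)
    (h : 8 * k ^ 2 * n < 2 ^ k * (k - 1)) : ∃ χ : ℕ → Fin 2, ¬ hasMonoAP 2 k n χ := by
  refine exists_not_hasMonoAP hk two_pos ?_
  have hpow : 2 ^ k = 2 * 2 ^ (k - 1) := by rw [← pow_succ', Nat.sub_add_cancel (by omega)]
  have hlt : 8 * (k * (k * (n / (k - 1)))) * (k - 1) < 2 ^ k * (k - 1) :=
    calc 8 * (k * (k * (n / (k - 1)))) * (k - 1) = 8 * k ^ 2 * (n / (k - 1) * (k - 1)) := by ring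
      _ ≤ 8 * k ^ 2 * n := Nat.mul_le_mul_left _ (Nat.div_mul_le_self n (k - 1))
      _ < 2 ^ k * (k - 1) := h
  have := Nat.lt_of_mul_lt_mul_right hlt
  omega

/-- If every 2-coloring of {1,...,n} contains a monochromatic k-term arithmetic
progression, then 2^k ≤ 8·k²·n/(k-1), equivalently n ≥ 2^(k-3)·(k-1)/k². -/
theorem two_color_bound (k n : ℕ) (hk : 2 ≤ k)
    (h : ∀ χ : ℕ → Fin 2, hasMonoAP 2 k n χ) :
    (2 : ℝ) ^ (k : ℝ) ≤ 8 * (k : ℝ) ^ 2 * n / ((k : ℝ) - 1) ∧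
      (2 : ℝ) ^ ((k : ℝ) - 3) * ((k : ℝ) - 1) / (k : ℝ) ^ 2 ≤ (n : ℝ) := by
  have hnat : 2 ^ k * (k - 1) ≤ 8 * k ^ 2 * n := by
    by_contra hlt
    obtain ⟨χ, hχ⟩ := exists_two_coloring_not_hasMonoAP hk (not_le.1 hlt)
    exact hχ (h χ)
  have hreal : (2 : ℝ) ^ k * ((k : ℝ) - 1) ≤ 8 * (k : ℝ) ^ 2 * n := by
    simpa [Nat.cast_sub (by omega : 1 ≤ k)] using (Nat.cast_le (α := ℝ)).2 hnat
  have hk1 : (0 : ℝ) < (k : ℝ) - 1 := by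
    have : (2 : ℝ) ≤ k := by exact_mod_cast hk
    linarith
  have hpow : (2 : ℝ) ^ ((k : ℝ) - 3) = 2 ^ k / 8 := by
    rw [Real.rpow_sub two_pos, Real.rpow_natCast]
    norm_num
  rw [Real.rpow_natCast, le_div_iff₀ hk1, hpow, div_le_iff₀ (by positivity)]
  exact ⟨hreal, by linarith⟩
end LocalLemma
end
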